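/- Let K be a field of characteristic not 2 and λ ∈ K with λ ∉ {0, 1, −1}. Consider the elliptic curve E: y² = (x+λ²)(x+1)x over K. Then the point Q = (λ, −λ(λ+1)) lies on E(K) and 2Q = (0,0); in particular Q has order 4, and E(K) contains a subgroup isomorphic to ℤ/4ℤ ⊕ ℤ/2ℤ. -/

import Mathlib

/-- The elliptic curve `y² = (x − α₁)(x − α₂)(x − α₃)` as an affine Weierstrass curve. -/
def cubicCurve {K : Type*} [Field K] (α₁ α₂ α₃ : K) : WeierstrassCurve.Affine K :=
  { a₁ := 0, a₂ := -(α₁ + α₂ + α₃), a₃ := 0,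
    a₄ := α₁ * α₂ + α₂ * α₃ + α₃ * α₁, a₆ := -(α₁ * α₂ * α₃) }

/-!
On `y² = x (x + r²) (x + s²)` the point `Q = (rs, -rs(r + s))` has tangent of slope `-(r + s)`,
and since `(r + s)² = r² + s² + 2rs` this tangent meets the curve a third time at `(0, 0)`.
So `2Q = (0, 0)`, a point of order 2, and `Q` has order 4. For `r = λ`, `s = 1` the 2-torsion
point `(-1, 0)` differs from `2Q`, so together with `Q` it spans a copy of `ℤ/4 × ℤ/2`.
-/

section
variable {A : Type*} [AddCommGroup A] {n : ℕ} {P : A}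

def zmodMultiplesHom (hP : n • P = 0) : ZMod n →+ A :=
  ZMod.lift n ⟨zmultiplesHom A P, by rwa [zmultiplesHom_apply, natCast_zsmul]⟩

theorem zmodMultiplesHom_one (hP : n • P = 0) : zmodMultiplesHom hP 1 = P := by
  simpa [zmodMultiplesHom] using ZMod.lift_coe n ⟨zmultiplesHom A P, _⟩ 1

theorem zmodMultiplesHom_injective (hP : addOrderOf P = n) :
    Function.Injective (zmodMultiplesHom (hP ▸ addOrderOf_nsmul_eq_zero P)) :=
  (ZMod.lift_injective n).2 fun m hm => (ZMod.intCast_zmod_eq_zero_iff_dvd m n).2 <| by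
    rwa [← hP, addOrderOf_dvd_iff_zsmul_eq_zero]

end

theorem addOrderOf_eq_four_of_two_nsmul {A : Type*} [AddMonoid A] {P T : A} (hPT : 2 • P = T)
    (hT : addOrderOf T = 2) : addOrderOf P = 4 := by
  obtain ⟨h2T, hT0⟩ := addOrderOf_eq_prime_iff.1 hT
  exact addOrderOf_eq_prime_pow (p := 2) (n := 1) (by simpa [hPT] using hT0)
    (by rwa [pow_succ, mul_nsmul, pow_one, hPT])

theorem exists_injective_zmod_four_prod_zmod_two {A : Type*} [AddCommGroup A] {P T : A}
    (hP : addOrderOf P = 4) (hT : addOrderOf T = 2) (hTP : T ≠ 2 • P) :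
    ∃ φ : ZMod 4 × ZMod 2 →+ A, Function.Injective φ := by
  have h2T : 2 • T = 0 := hT ▸ addOrderOf_nsmul_eq_zero T
  set φ₁ := zmodMultiplesHom (hP ▸ addOrderOf_nsmul_eq_zero P)
  have hφ₁ : Function.Injective φ₁ := zmodMultiplesHom_injective hP
  refine ⟨φ₁.coprod (zmodMultiplesHom h2T), (injective_iff_map_eq_zero _).2 ?_⟩
  rintro ⟨a, b⟩ h
  simp only [AddMonoidHom.coprod_apply] at h
  obtain rfl | rfl : b = 0 ∨ b = 1 := (by decide : ∀ b : ZMod 2, b = 0 ∨ b = 1) b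
  · simpa using (map_eq_zero_iff φ₁ hφ₁).1 (by simpa using h)
  · exfalso
    have ha : φ₁ a = T := by
      rw [zmodMultiplesHom_one, add_eq_zero_iff_eq_neg] at h
      rwa [h, neg_eq_iff_add_eq_zero, ← two_nsmul]
    have h2a : 2 • a = 0 := by rw [← map_eq_zero_iff φ₁ hφ₁, map_nsmul, ha, h2T]
    obtain rfl | rfl : a = 0 ∨ a = 2 :=
      (by decide : ∀ a : ZMod 4, 2 • a = 0 → a = 0 ∨ a = 2) a h2a
    · exact (addOrderOf_eq_prime_iff.1 hT).2 (by simpa using ha.symm)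
    · exact hTP <| by
        rw [← ha, show (2 : ZMod 4) = 2 • 1 from rfl, map_nsmul, zmodMultiplesHom_one]

open WeierstrassCurve.Affine

section
variable {K : Type*} [Field K]

theorem cubicCurve_rotate (α₁ α₂ α₃ : K) : cubicCurve α₁ α₂ α₃ = cubicCurve α₂ α₃ α₁ := by
  ext <;> simp only [cubicCurve] <;> ring

theorem cubicCurve_equation_iff {α₁ α₂ α₃ x y : K} :
    (cubicCurve α₁ α₂ α₃).Equation x y ↔ y ^ 2 = (x - α₁) * (x - α₂) * (x - α₃) := by
  rw [equation_iff]
  simp only [cubicCurve]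
  constructor <;> intro h <;> linear_combination h

theorem cubicCurve_negY (α₁ α₂ α₃ x y : K) : (cubicCurve α₁ α₂ α₃).negY x y = -y := by
  simp [cubicCurve]

theorem cubicCurve_nonsingular_root {α₁ α₂ α₃ : K} (h₁₂ : α₁ ≠ α₂) (h₁₃ : α₁ ≠ α₃) :
    (cubicCurve α₁ α₂ α₃).Nonsingular α₁ 0 := by
  refine (nonsingular_iff' ..).2 ⟨cubicCurve_equation_iff.2 (by ring), Or.inl ?_⟩
  convert neg_ne_zero.2 (mul_ne_zero (sub_ne_zero.2 h₁₂) (sub_ne_zero.2 h₁₃)) using 1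
  simp only [cubicCurve]
  ring

theorem cubicCurve_nonsingular_of_two_mul_ne_zero {α₁ α₂ α₃ x y : K}
    (h : (cubicCurve α₁ α₂ α₃).Equation x y) (hy : 2 * y ≠ 0) :
    (cubicCurve α₁ α₂ α₃).Nonsingular x y :=
  (nonsingular_iff' ..).2 ⟨h, Or.inr (by simpa [cubicCurve] using hy)⟩

theorem cubicCurve_neg_sq_nonsingular {r s : K} (h2 : (2 : K) ≠ 0) (hrs : r * s * (r + s) ≠ 0) :
    (cubicCurve (-(r ^ 2)) (-(s ^ 2)) 0).Nonsingular (r * s) (-(r * s * (r + s))) :=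
  cubicCurve_nonsingular_of_two_mul_ne_zero (cubicCurve_equation_iff.2 (by ring))
    (by simpa using mul_ne_zero h2 hrs)

variable [DecidableEq K]

theorem cubicCurve_addOrderOf_root {α₁ α₂ α₃ x : K}
    (h : (cubicCurve α₁ α₂ α₃).Nonsingular x 0) : addOrderOf (Point.some x 0 h) = 2 := by
  refine addOrderOf_eq_prime ?_ (Point.some_ne_zero h)
  rw [two_nsmul]
  exact Point.add_self_of_Y_eq (by rw [cubicCurve_negY, neg_zero])

theorem cubicCurve_neg_sq_exists_two_nsmul {r s : K} (h2 : (2 : K) ≠ 0)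
    (hrs : r * s * (r + s) ≠ 0) :
    ∃ (hQ : (cubicCurve (-(r ^ 2)) (-(s ^ 2)) 0).Nonsingular (r * s) (-(r * s * (r + s))))
      (hT : (cubicCurve (-(r ^ 2)) (-(s ^ 2)) 0).Nonsingular 0 0),
      2 • Point.some _ _ hQ = Point.some _ _ hT := by
  set W := cubicCurve (-(r ^ 2)) (-(s ^ 2)) 0 with hW
  set y := -(r * s * (r + s))
  have hT : W.Nonsingular 0 0 := by
    rw [hW, cubicCurve_rotate, cubicCurve_rotate]
    obtain ⟨hr, hs⟩ := mul_ne_zero_iff.1 (left_ne_zero_of_mul hrs)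
    exact cubicCurve_nonsingular_root (by simpa using hr) (by simpa using hs)
  refine ⟨cubicCurve_neg_sq_nonsingular h2 hrs, hT, ?_⟩
  have hy : y ≠ W.negY (r * s) y := by
    rw [cubicCurve_negY]
    intro h
    exact mul_ne_zero h2 hrs (by linear_combination -h)
  have hslope : W.slope (r * s) (r * s) y y = -(r + s) := by
    rw [slope_of_Y_ne rfl hy, div_eq_iff (sub_ne_zero.2 hy), cubicCurve_negY]
    simp only [W, y, cubicCurve]
    ring
  rw [two_nsmul, Point.add_self_of_Y_ne hy, Point.some.injEq, addY, cubicCurve_negY, negAddY,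
    addX, hslope]
  simp only [W, y, cubicCurve]
  constructor <;> ring

end

open Classical in
theorem order_four_point_on_E1 {K : Type*} [Field K] (h2 : (2 : K) ≠ 0)
    (lam : K) (h0 : lam ≠ 0) (h1 : lam ≠ 1) (hm1 : lam ≠ -1) :
    ∃ (hQ : (cubicCurve (-(lam ^ 2)) (-1) 0).Nonsingular lam (-(lam * (lam + 1))))
      (hW : (cubicCurve (-(lam ^ 2)) (-1) 0).Nonsingular 0 0),
      2 • (WeierstrassCurve.Affine.Point.some _ _ hQ) = .some _ _ hW ∧
      addOrderOf (WeierstrassCurve.Affine.Point.some _ _ hQ) = 4 ∧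
      ∃ φ : (ZMod 4 × ZMod 2) →+ (cubicCurve (-(lam ^ 2)) (-1) 0).Point,
        Function.Injective φ := by
  have hhalf := cubicCurve_neg_sq_exists_two_nsmul h2
    (show lam * 1 * (lam + 1) ≠ 0 by simpa [h0, add_eq_zero_iff_eq_neg] using hm1)
  rw [one_pow, mul_one] at hhalf
  obtain ⟨hQ, hT, hdbl⟩ := hhalf
  have hT' : (cubicCurve (-(lam ^ 2)) (-1) 0).Nonsingular (-1) 0 := by
    rw [cubicCurve_rotate]
    exact cubicCurve_nonsingular_root (neg_ne_zero.2 one_ne_zero)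
      (by rw [ne_eq, neg_inj, eq_comm, sq_eq_one_iff]; exact not_or.2 ⟨h1, hm1⟩)
  have hord := addOrderOf_eq_four_of_two_nsmul hdbl (cubicCurve_addOrderOf_root hT)
  refine ⟨hQ, hT, hdbl, hord, exists_injective_zmod_four_prod_zmod_two hord
    (cubicCurve_addOrderOf_root hT') ?_⟩
  simp [hdbl]
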